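/- Let (W, S) be a Coxeter system with S finite and ε an automorphism. There is a bijection from S(J, ε) to T(J, ε) given by (J_n, J'_n, u_n)_{n≥0} ↦ (J_n, u_0 u_1 ⋯ u_n)_{n≥0}. -/

import Mathlib

/-!
The map `(J_n, J'_n, u_n) ↦ (J_n, u_0 ⋯ u_n)` has the evident inverse `w_n ↦ u_n = w_{n-1}⁻¹ w_n`,
so the point is that the defining conditions of `S(J, ε)` and `T(J, ε)` match. All of them are
conditions on descents: `w` is the minimal element of `W_K w`, of `w W_K`, or of `W_K w W_K'` iff it
has no left descent in `K`, no right descent in `K`, or neither. If `w = u_0 ⋯ u_{n-1}` has no right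
descent in `J_{n-1}`, lengths add along `w W_{J_{n-1}}`; hence for `u_n ∈ W_{J_{n-1}}` the right
descents of `w u_n` in `J_{n-1}` are those of `u_n`, and `w s_t w⁻¹ = s_k` is a left descent of
`w u_n` iff `s_t` is one of `u_n`. This translates the conditions on `u_n` into those on `w_n`
and back.

The descent characterisations need the exchange condition for arbitrary, not necessarily reduced,
words, which is proved with the action of `W` on `W × ℤˣ` by conjugation twisted by a sign: for a
word `ω`, the sign counts the occurrences of a reflection in the right inversion sequence of `ω`.
-/

namespace Lusztig

variable {B : Type*} {W : Type*} [Group W] {M : CoxeterMatrix B}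

/-- The standard parabolic subgroup `W_K` generated by the simple reflections in `K`. -/
def WP (cs : CoxeterSystem M W) (K : Set B) : Subgroup W :=
  Subgroup.closure (cs.simple '' K)

/-- `w` is the unique minimal length element of its left coset `W_K w`
(i.e. `w ∈ ᴷW`). -/
def IsMinL (cs : CoxeterSystem M W) (K : Set B) (w : W) : Prop :=
  ∀ a ∈ WP cs K, a * w ≠ w → cs.length w < cs.length (a * w)

/-- `w` is the unique minimal length element of its right coset `w W_K`
(i.e. `w ∈ Wᴷ`). -/
def IsMinR (cs : CoxeterSystem M W) (K : Set B) (w : W) : Prop :=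
  ∀ b ∈ WP cs K, w * b ≠ w → cs.length w < cs.length (w * b)

/-- `x` is the unique minimal length element of its double coset `W_K x W_{K'}`
(i.e. `x ∈ ᴷWᴷ'`). -/
def IsMinDC (cs : CoxeterSystem M W) (K K' : Set B) (x : W) : Prop :=
  ∀ a ∈ WP cs K, ∀ b ∈ WP cs K', a * x * b ≠ x → cs.length x < cs.length (a * x * b)

/-- `x` is the unique minimal length element of the double coset `W_K g W_{K'}`. -/
def IsMinOf (cs : CoxeterSystem M W) (K K' : Set B) (g x : W) : Prop :=
  (∃ a ∈ WP cs K, ∃ b ∈ WP cs K', x = a * g * b) ∧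
  ∀ a ∈ WP cs K, ∀ b ∈ WP cs K', a * g * b ≠ x → cs.length x < cs.length (a * g * b)

/-- `Ad(x)J ∩ S`, as a set of indices of simple reflections:
the set of `s` with `simple s = x * (simple t) * x⁻¹` for some `t ∈ J`. -/
def AdSet (cs : CoxeterSystem M W) (x : W) (J : Set B) : Set B :=
  {s | ∃ t ∈ J, cs.simple s = x * cs.simple t * x⁻¹}

/-- The product `u 0 * u 1 * ⋯ * u (n-1)`. -/
def pr (u : ℕ → W) (n : ℕ) : W := ((List.range n).map u).prod

/-- Lusztig's set `S(J, ε)` (2.3): sequences `(J_n, J'_n, u_n)` with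
`J = J_0 ⊇ J_1 ⊇ ⋯`, `ε(J_n) = ε(J_{n-1}) ∩ Ad(u_0⋯u_{n-1})J_{n-1}` (n ≥ 1),
`J'_0 = ε(J) = J'`, `J'_n = J_{n-1} ∩ Ad(u_0⋯u_{n-1})⁻¹ε(J_{n-1})` (n ≥ 1),
`u_n ∈ W_{J_{n-1}}` (n ≥ 1), `u_n ∈ {}^{J'_n}W ∩ W^{J_n}` (n ≥ 0).
Here `ε` is encoded by its restriction `f : B ≃ B` to the simple reflections. -/
structure SSeq (cs : CoxeterSystem M W) (f : B ≃ B) (J : Set B) where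
  Jn : ℕ → Set B
  J'n : ℕ → Set B
  u : ℕ → W
  hJ0 : Jn 0 = J
  hJ'0 : J'n 0 = f '' J
  hmono : ∀ n, Jn (n + 1) ⊆ Jn n
  hb : ∀ n, f '' Jn (n + 1) = (f '' Jn n) ∩ AdSet cs (pr u (n + 1)) (Jn n)
  hc : ∀ n, J'n (n + 1) = Jn n ∩ AdSet cs (pr u (n + 1))⁻¹ (f '' Jn n)
  hd : ∀ n, u (n + 1) ∈ WP cs (Jn n)
  he : ∀ n, IsMinL cs (J'n n) (u n) ∧ IsMinR cs (Jn n) (u n)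

/-- Lusztig's set `T(J, ε)` (2.2): sequences `(J_n, w_n)` with
`J = J_0 ⊇ J_1 ⊇ ⋯`, `J_n = J_{n-1} ∩ ε⁻¹(Ad(w_{n-1})J_{n-1})` (n ≥ 1),
`w_n ∈ {}^{ε(J_n)}W^{J_n}` (n ≥ 0), `w_n ∈ W_{ε(J_n)} w_{n-1} W_{J_{n-1}}` (n ≥ 1). -/
structure TSeq (cs : CoxeterSystem M W) (f : B ≃ B) (J : Set B) where
  Jn : ℕ → Set B
  w : ℕ → W
  hJ0 : Jn 0 = J
  hmono : ∀ n, Jn (n + 1) ⊆ Jn n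
  hb : ∀ n, Jn (n + 1) = Jn n ∩ f.symm '' AdSet cs (w n) (Jn n)
  hc : ∀ n, IsMinDC cs (f '' Jn n) (Jn n) (w n)
  hd : ∀ n, ∃ a ∈ WP cs (f '' Jn (n + 1)), ∃ b ∈ WP cs (Jn n), w (n + 1) = a * w n * b

end Lusztig

namespace CoxeterSystem

open List

variable {B W : Type*} [Group W] {M : CoxeterMatrix B} (cs : CoxeterSystem M W)

local prefix:100 "s" => cs.simple
local prefix:100 "π" => cs.wordProd
local prefix:100 "ℓ" => cs.length
local prefix:100 "ris" => cs.rightInvSeq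
local prefix:100 "lis" => cs.leftInvSeq

open scoped Classical

theorem alternatingWord_two_mul_succ (i j : B) (m : ℕ) :
    alternatingWord i j (2 * (m + 1)) = i :: j :: alternatingWord i j (2 * m) := by
  rw [show 2 * (m + 1) = 2 * m + 1 + 1 by ring, alternatingWord_succ', alternatingWord_succ',
    if_neg (Nat.not_even_two_mul_add_one m), if_pos (even_two_mul m)]

theorem prod_map_alternatingWord_two_mul {G : Type*} [Monoid G] (g : B → G) (i j : B) (m : ℕ) :
    ((alternatingWord i j (2 * m)).map g).prod = (g i * g j) ^ m := by
  induction m with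
  | zero => simp [alternatingWord]
  | succ m ih => simp [alternatingWord_two_mul_succ, ih, pow_succ', mul_assoc]

theorem reverse_alternatingWord_two_mul (i j : B) (m : ℕ) :
    (alternatingWord i j (2 * m)).reverse = alternatingWord j i (2 * m) := by
  induction m with
  | zero => rfl
  | succ m ih =>
    rw [alternatingWord_two_mul_succ, reverse_cons, reverse_cons, ih,
      show 2 * (m + 1) = 2 * m + 1 + 1 by ring, alternatingWord_succ, alternatingWord_succ]
    simp

theorem leftInvSeq_alternatingWord_two_mul (i j : B) (m : ℕ) :
    lis (alternatingWord i j (2 * m)) = (range (2 * m)).map fun k ↦ s i * (s j * s i) ^ k := by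
  refine ext_getElem (by simp) fun k hk _ ↦ ?_
  rw [getElem_leftInvSeq_alternatingWord cs i j m k (by simpa using hk),
    prod_alternatingWord_eq_mul_pow, if_neg (Nat.not_even_two_mul_add_one k)]
  simp [Nat.add_div_of_dvd_right]

/-- The reflections `s j (s i s j)^k` along a braid word of length `2 M i j` run twice through the
same cycle of length `M i j`, so each reflection occurs an even number of times. -/
theorem even_count_rightInvSeq_alternatingWord (i j : B) (t : W) :
    Even ((ris (alternatingWord i j (2 * M i j))).count t) := by
  rw [← reverse_alternatingWord_two_mul j i, rightInvSeq_reverse, count_reverse,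
    leftInvSeq_alternatingWord_two_mul, two_mul, range_add, map_append, map_map, count_append]
  have hperiod : ((fun k ↦ s j * (s i * s j) ^ k) ∘ fun k ↦ M i j + k) =
      fun k ↦ s j * (s i * s j) ^ k := by
    funext k
    simp [pow_add, cs.simple_mul_simple_pow]
  rw [hperiod]
  exact ⟨_, rfl⟩

noncomputable def simpleSignedConj (i : B) : Equiv.Perm (W × ℤˣ) :=
  Function.Involutive.toPerm (fun p ↦ (s i * p.1 * s i, if p.1 = s i then -p.2 else p.2))
    (by
      rintro ⟨t, ε⟩
      by_cases h : t = s i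
      · simp [h]
      · simp [h, mul_assoc, mul_eq_one_iff_eq_inv])

theorem simpleSignedConj_apply (i : B) (t : W) (ε : ℤˣ) :
    cs.simpleSignedConj i (t, ε) = (s i * t * s i, if t = s i then -ε else ε) :=
  rfl

theorem prod_map_simpleSignedConj_apply (ω : List B) (t : W) (ε : ℤˣ) :
    (ω.map cs.simpleSignedConj).prod (t, ε) =
      (π ω * t * (π ω)⁻¹, (-1) ^ (ris ω).count t * ε) := by
  induction ω with
  | nil => simp
  | cons i ω ih =>
    have hflip : π ω * t * (π ω)⁻¹ = s i ↔ (π ω)⁻¹ * s i * π ω = t := by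
      constructor <;> intro h <;> rw [← h] <;> group
    simp only [map_cons, prod_cons, Equiv.Perm.mul_apply, ih, simpleSignedConj_apply,
      rightInvSeq, count_cons, wordProd_cons, hflip, beq_iff_eq]
    split_ifs <;> simp [pow_succ, mul_assoc]

theorem simpleSignedConj_mul_pow (i j : B) :
    (cs.simpleSignedConj i * cs.simpleSignedConj j) ^ M i j = 1 := by
  ext ⟨t, ε⟩ : 1
  rw [← prod_map_alternatingWord_two_mul, prod_map_simpleSignedConj_apply,
    (even_count_rightInvSeq_alternatingWord cs i j t).neg_one_pow, wordProd,
    prod_map_alternatingWord_two_mul, cs.simple_mul_simple_pow]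
  simp

noncomputable def signedConj : W →* Equiv.Perm (W × ℤˣ) :=
  cs.lift ⟨cs.simpleSignedConj, cs.simpleSignedConj_mul_pow⟩

theorem signedConj_wordProd_apply (ω : List B) (t : W) (ε : ℤˣ) :
    cs.signedConj (π ω) (t, ε) = (π ω * t * (π ω)⁻¹, (-1) ^ (ris ω).count t * ε) := by
  rw [← prod_map_simpleSignedConj_apply, wordProd, map_list_prod, map_map]
  congr 3
  funext i
  exact cs.lift_apply_simple _ i

theorem signedConj_simple (i : B) : cs.signedConj (s i) = cs.simpleSignedConj i :=
  cs.lift_apply_simple _ i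

theorem mem_rightInvSeq_of_isRightDescent {ω : List B} {i : B}
    (h : cs.IsRightDescent (π ω) i) : s i ∈ ris ω := by
  obtain ⟨ν, hν, hνω⟩ := cs.exists_isReduced (π ω * s i)
  have hsplit : π ω = π ν * s i := by rw [← hνω, simple_mul_simple_cancel_right]
  have hsign : cs.signedConj (π ω) (s i, 1) = cs.signedConj (π ν) (s i, -1) := by
    rw [hsplit, map_mul, Equiv.Perm.mul_apply, signedConj_simple]
    simp [simpleSignedConj_apply]
  rw [signedConj_wordProd_apply, signedConj_wordProd_apply] at hsign
  -- If `s i ∉ ris ω`, the signs force `s i ∈ ris ν`, i.e. `s i` is a right descent of `π ν`.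
  by_contra hnot
  have hν_mem : s i ∈ ris ν := by
    by_contra hν_not
    have := congrArg Prod.snd hsign
    simp [count_eq_zero.mpr hν_not, count_eq_zero.mpr hnot] at this
  have := (cs.isRightInversion_of_mem_rightInvSeq hν hν_mem).2
  rw [← hsplit, ← hνω] at this
  exact lt_asymm this h

theorem mem_leftInvSeq_of_isLeftDescent {ω : List B} {i : B}
    (h : cs.IsLeftDescent (π ω) i) : s i ∈ lis ω := by
  have h' : cs.IsRightDescent (π ω.reverse) i := by
    rwa [wordProd_reverse, isRightDescent_inv_iff]
  simpa [rightInvSeq_reverse] using cs.mem_rightInvSeq_of_isRightDescent h'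

theorem exists_eraseIdx_of_isLeftDescent {ω : List B} {i : B}
    (h : cs.IsLeftDescent (π ω) i) : ∃ j < ω.length, s i * π ω = π (ω.eraseIdx j) := by
  obtain ⟨j, hj, hji⟩ := mem_iff_getElem.mp (cs.mem_leftInvSeq_of_isLeftDescent h)
  refine ⟨j, by simpa using hj, ?_⟩
  rw [← hji, ← getD_eq_getElem _ 1 hj, getD_leftInvSeq_mul_wordProd]

theorem exists_isReduced_sublist (ω : List B) :
    ∃ ν, ν <+ ω ∧ cs.IsReduced ν ∧ π ν = π ω := by
  induction ω with
  | nil => exact ⟨[], Sublist.slnil, by simp [IsReduced], rfl⟩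
  | cons i ω ih =>
    obtain ⟨ν, hsub, hred, hprod⟩ := ih
    rcases cs.length_simple_mul (π ν) i with hup | hdown
    · refine ⟨i :: ν, hsub.cons_cons i, ?_, by rw [wordProd_cons, wordProd_cons, hprod]⟩
      rw [IsReduced, wordProd_cons, hup, hred.eq, length_cons]
    · obtain ⟨j, hj, hji⟩ := cs.exists_eraseIdx_of_isLeftDescent (ω := ν) (i := i) (by
        rw [IsLeftDescent]; omega)
      refine ⟨ν.eraseIdx j, ((eraseIdx_sublist ν j).trans hsub).cons i, ?_, ?_⟩
      · have := length_eraseIdx_add_one hj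
        have := hred.eq
        rw [IsReduced, ← hji]
        omega
      · rw [← hji, hprod, wordProd_cons]

end CoxeterSystem

namespace Lusztig

variable {B : Type*} {W : Type*} [Group W] {M : CoxeterMatrix B}

open CoxeterSystem List

section Parabolic

variable (cs : CoxeterSystem M W)

local prefix:100 "s" => cs.simple
local prefix:100 "π" => cs.wordProd
local prefix:100 "ℓ" => cs.length

theorem simple_mem_WP {K : Set B} {i : B} (hi : i ∈ K) : s i ∈ WP cs K :=
  Subgroup.subset_closure ⟨i, hi, rfl⟩

theorem wordProd_mem_WP {K : Set B} {ω : List B} (hω : ∀ i ∈ ω, i ∈ K) : π ω ∈ WP cs K :=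
  Subgroup.list_prod_mem _ (by simpa using fun i hi ↦ simple_mem_WP cs (hω i hi))

theorem exists_wordProd_eq_of_mem_WP {K : Set B} {w : W} (hw : w ∈ WP cs K) :
    ∃ ω : List B, (∀ i ∈ ω, i ∈ K) ∧ π ω = w := by
  induction hw using Subgroup.closure_induction with
  | mem _ hx =>
    obtain ⟨i, hi, rfl⟩ := hx
    exact ⟨[i], by simpa using hi, cs.wordProd_singleton i⟩
  | one => exact ⟨[], by simp, cs.wordProd_nil⟩
  | mul _ _ _ _ ihx ihy =>
    obtain ⟨ω₁, h₁, rfl⟩ := ihx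
    obtain ⟨ω₂, h₂, rfl⟩ := ihy
    exact ⟨ω₁ ++ ω₂, by simpa using fun i hi ↦ hi.elim (h₁ i) (h₂ i), cs.wordProd_append _ _⟩
  | inv _ _ ih =>
    obtain ⟨ω, h, rfl⟩ := ih
    exact ⟨ω.reverse, by simpa using h, cs.wordProd_reverse ω⟩

theorem exists_isLeftDescent_of_mem_WP {K : Set B} {w : W} (hw : w ∈ WP cs K) (hne : w ≠ 1) :
    ∃ i ∈ K, cs.IsLeftDescent w i := by
  obtain ⟨ω₀, hK₀, rfl⟩ := exists_wordProd_eq_of_mem_WP cs hw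
  obtain ⟨ω, hsub, hred, hprod⟩ := cs.exists_isReduced_sublist ω₀
  rw [← hprod] at hne ⊢
  match ω, hred, hne with
  | [], _, hne => exact absurd cs.wordProd_nil hne
  | i :: ω, hred, _ =>
    refine ⟨i, hK₀ i (hsub.subset mem_cons_self), ?_⟩
    have := cs.length_wordProd_le ω
    rw [IsLeftDescent, wordProd_cons, simple_mul_simple_cancel_left, ← wordProd_cons, hred.eq,
      length_cons]
    omega

theorem length_mul_of_forall_length_le {K : Set B} {u : W}
    (hu : ∀ a ∈ WP cs K, ℓ u ≤ ℓ (a * u)) {a : W} (ha : a ∈ WP cs K) :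
    ℓ (a * u) = ℓ a + ℓ u := by
  obtain ⟨ωa, hK, rfl⟩ := exists_wordProd_eq_of_mem_WP cs ha
  obtain ⟨ωu, hωu, rfl⟩ := cs.exists_isReduced u
  obtain ⟨ν, hsub, hν, hνprod⟩ := cs.exists_isReduced_sublist (ωa ++ ωu)
  obtain ⟨ν₁, ν₂, rfl, h₁, h₂⟩ := sublist_append_iff.mp hsub
  rw [wordProd_append, wordProd_append] at hνprod
  have hν₁ : π ν₁ ∈ WP cs K := wordProd_mem_WP cs fun i hi ↦ hK i (h₁.subset hi)
  -- `π ν₂` lies in the coset `W_K (π ωu)`, so it cannot be shorter than the reduced word `ωu`.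
  have hν₂ : ν₂ = ωu := by
    refine h₂.eq_of_length (le_antisymm h₂.length_le ?_)
    have hcoset : (π ν₁)⁻¹ * π ωa * π ωu = π ν₂ := by
      rw [mul_assoc, ← hνprod]; group
    have := hu _ (mul_mem (inv_mem hν₁) ha)
    rw [hcoset, hωu.eq] at this
    exact this.trans (cs.length_wordProd_le ν₂)
  subst hν₂
  have hν₁ωa : π ν₁ = π ωa := mul_right_cancel hνprod
  refine le_antisymm (cs.length_mul_le _ _) ?_
  calc ℓ (π ωa) + ℓ (π ν₂) = ℓ (π ν₁) + ν₂.length := by rw [hν₁ωa, hωu.eq]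
    _ ≤ ν₁.length + ν₂.length := by gcongr; exact cs.length_wordProd_le ν₁
    _ = ℓ (π ωa * π ν₂) := by rw [← hνprod, ← wordProd_append, hν.eq, length_append]

theorem length_mul_of_forall_not_isLeftDescent {K : Set B} {u : W}
    (hu : ∀ i ∈ K, ¬cs.IsLeftDescent u i) {a : W} (ha : a ∈ WP cs K) :
    ℓ (a * u) = ℓ a + ℓ u := by
  have hK : (WP cs K : Set W).Nonempty := ⟨1, one_mem _⟩
  set a₀ := Function.argminOn (fun a : W ↦ ℓ (a * u)) (WP cs K : Set W) hK
  have ha₀ : a₀ ∈ WP cs K := Function.argminOn_mem _ _ hK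
  have hmin : ∀ b ∈ WP cs K, ℓ (a₀ * u) ≤ ℓ (b * (a₀ * u)) := fun b hb ↦ by
    rw [← mul_assoc]; exact Function.argminOn_le (fun a : W ↦ ℓ (a * u)) _ (mul_mem hb ha₀)
  have hsplit : u = a₀⁻¹ * (a₀ * u) := by group
  -- A left descent of `a₀⁻¹` in `K` would be a left descent of `u = a₀⁻¹ * (a₀ * u)`.
  have ha₀_one : a₀⁻¹ = 1 := by
    by_contra hne
    obtain ⟨i, hi, hdesc⟩ := exists_isLeftDescent_of_mem_WP cs (inv_mem ha₀) hne
    apply hu i hi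
    rw [IsLeftDescent, hsplit, ← mul_assoc,
      length_mul_of_forall_length_le cs hmin (mul_mem (simple_mem_WP cs hi) (inv_mem ha₀)),
      length_mul_of_forall_length_le cs hmin (inv_mem ha₀)]
    exact Nat.add_lt_add_right hdesc _
  simp only [inv_eq_one.mp ha₀_one, one_mul] at hmin
  exact length_mul_of_forall_length_le cs hmin ha

theorem length_mul_of_forall_not_isRightDescent {K : Set B} {u : W}
    (hu : ∀ i ∈ K, ¬cs.IsRightDescent u i) {b : W} (hb : b ∈ WP cs K) :
    ℓ (u * b) = ℓ u + ℓ b := by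
  have hu' : ∀ i ∈ K, ¬cs.IsLeftDescent u⁻¹ i := fun i hi ↦ by
    rw [isLeftDescent_inv_iff]; exact hu i hi
  have := length_mul_of_forall_not_isLeftDescent cs hu' (inv_mem hb)
  rwa [← mul_inv_rev, length_inv, length_inv, length_inv, add_comm] at this

theorem isMinL_iff {K : Set B} {w : W} :
    IsMinL cs K w ↔ ∀ i ∈ K, ¬cs.IsLeftDescent w i := by
  refine ⟨fun h i hi hdesc ↦ ?_, fun h a ha hne ↦ ?_⟩
  · exact lt_asymm hdesc (h _ (simple_mem_WP cs hi) fun h' ↦ hdesc.ne (congrArg cs.length h'))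
  · have : ℓ a ≠ 0 := fun h0 ↦ hne (by rw [cs.length_eq_zero_iff.mp h0, one_mul])
    rw [length_mul_of_forall_not_isLeftDescent cs h ha]
    omega

theorem isMinR_iff {K : Set B} {w : W} :
    IsMinR cs K w ↔ ∀ i ∈ K, ¬cs.IsRightDescent w i := by
  refine ⟨fun h i hi hdesc ↦ ?_, fun h b hb hne ↦ ?_⟩
  · exact lt_asymm hdesc (h _ (simple_mem_WP cs hi) fun h' ↦ hdesc.ne (congrArg cs.length h'))
  · have : ℓ b ≠ 0 := fun h0 ↦ hne (by rw [cs.length_eq_zero_iff.mp h0, mul_one])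
    rw [length_mul_of_forall_not_isRightDescent cs h hb]
    omega

section DoubleCoset

variable {K J : Set B} {x : W} (hL : ∀ i ∈ K, ¬cs.IsLeftDescent x i)
  (hR : ∀ i ∈ J, ¬cs.IsRightDescent x i)
include hL hR

theorem length_le_length_mul_mul {a b : W} (ha : a ∈ WP cs K) (hb : b ∈ WP cs J) :
    ℓ x ≤ ℓ (a * x * b) := by
  have h₁ := length_mul_of_forall_not_isLeftDescent cs hL ha
  have h₂ := length_mul_of_forall_not_isRightDescent cs hR hb
  have h₃ := cs.length_le_length_mul_add_right (a * x) b
  have h₄ := cs.length_le_length_mul_add_left a (x * b)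
  rw [← mul_assoc] at h₄
  omega

theorem mul_mul_eq_self_of_length_eq {a b : W} (ha : a ∈ WP cs K) (hb : b ∈ WP cs J)
    (h : ℓ (a * x * b) = ℓ x) : a * x * b = x := by
  induction hn : ℓ a using Nat.strong_induction_on generalizing a b with
  | _ n ih =>
  by_cases ha₁ : a = 1
  · subst ha₁
    rw [one_mul, length_mul_of_forall_not_isRightDescent cs hR hb] at h
    rw [one_mul, cs.length_eq_zero_iff.mp (by omega : ℓ b = 0), mul_one]
  obtain ⟨i, hi, hdesc⟩ := exists_isLeftDescent_of_mem_WP cs ha ha₁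
  have ha' : s i * a ∈ WP cs K := mul_mem (simple_mem_WP cs hi) ha
  have hax : cs.IsLeftDescent (a * x) i := by
    rw [IsLeftDescent, ← mul_assoc, length_mul_of_forall_not_isLeftDescent cs hL ha',
      length_mul_of_forall_not_isLeftDescent cs hL ha]
    exact Nat.add_lt_add_right hdesc _
  obtain ⟨ω₁, hω₁, hω₁prod⟩ := cs.exists_isReduced (a * x * b)
  obtain ⟨ω₂, hω₂J, hω₂prod⟩ := exists_wordProd_eq_of_mem_WP cs (inv_mem hb)
  have hword : π (ω₁ ++ ω₂) = a * x := by rw [wordProd_append, ← hω₁prod, hω₂prod]; group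
  obtain ⟨j, -, hexch⟩ := cs.exists_eraseIdx_of_isLeftDescent (hword ▸ hax)
  rw [hword] at hexch
  rcases lt_or_ge j ω₁.length with hj | hj
  · -- Deleting a letter of `ω₁` would make `(s i * a) * x * b` shorter than `x`.
    rw [eraseIdx_append_of_lt_length hj, wordProd_append, hω₂prod] at hexch
    have hshort : s i * a * x * b = π (ω₁.eraseIdx j) := by
      rw [mul_assoc (s i), hexch]; group
    have hlow := length_le_length_mul_mul cs hL hR ha' hb
    have hlen := hω₁.eq
    rw [hshort] at hlow
    rw [← hω₁prod, h] at hlen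
    have := cs.length_wordProd_le (ω₁.eraseIdx j)
    have := length_eraseIdx_add_one hj
    omega
  · rw [eraseIdx_append_of_length_le hj, wordProd_append, ← hω₁prod] at hexch
    have hb' : (π (ω₂.eraseIdx (j - ω₁.length)))⁻¹ ∈ WP cs J :=
      inv_mem (wordProd_mem_WP cs fun k hk ↦ hω₂J k ((eraseIdx_sublist _ _).subset hk))
    have heq : s i * a * x * (π (ω₂.eraseIdx (j - ω₁.length)))⁻¹ = a * x * b := by
      rw [mul_assoc (s i), hexch, mul_inv_cancel_right]
    rw [← heq]
    exact ih _ (hn ▸ hdesc) ha' hb' (heq ▸ h) rfl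

end DoubleCoset

theorem isMinDC_iff {K J : Set B} {x : W} :
    IsMinDC cs K J x ↔
      (∀ i ∈ K, ¬cs.IsLeftDescent x i) ∧ ∀ i ∈ J, ¬cs.IsRightDescent x i := by
  refine ⟨fun h ↦ ⟨fun i hi hdesc ↦ ?_, fun i hi hdesc ↦ ?_⟩, fun ⟨hL, hR⟩ a ha b hb hne ↦ ?_⟩
  · have := h _ (simple_mem_WP cs hi) 1 (one_mem _)
    simp only [mul_one] at this
    exact lt_asymm hdesc (this fun h' ↦ hdesc.ne (congrArg cs.length h'))
  · have := h 1 (one_mem _) _ (simple_mem_WP cs hi)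
    simp only [one_mul] at this
    exact lt_asymm hdesc (this fun h' ↦ hdesc.ne (congrArg cs.length h'))
  · exact (length_le_length_mul_mul cs hL hR ha hb).lt_of_ne
      fun h ↦ hne (mul_mul_eq_self_of_length_eq cs hL hR ha hb h.symm)

section ProductDescents

variable {K : Set B} {w x : W} (hw : ∀ i ∈ K, ¬cs.IsRightDescent w i) (hx : x ∈ WP cs K)
include hw hx

theorem isRightDescent_mul_iff {j : B} (hj : j ∈ K) :
    cs.IsRightDescent (w * x) j ↔ cs.IsRightDescent x j := by
  rw [IsRightDescent, IsRightDescent, mul_assoc,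
    length_mul_of_forall_not_isRightDescent cs hw (mul_mem hx (simple_mem_WP cs hj)),
    length_mul_of_forall_not_isRightDescent cs hw hx, Nat.add_lt_add_iff_left]

theorem isLeftDescent_mul_iff {k t : B} (ht : t ∈ K) (hkt : s k = w * s t * w⁻¹) :
    cs.IsLeftDescent (w * x) k ↔ cs.IsLeftDescent x t := by
  have hconj : s k * (w * x) = w * (s t * x) := by rw [hkt]; group
  rw [IsLeftDescent, IsLeftDescent, hconj,
    length_mul_of_forall_not_isRightDescent cs hw (mul_mem (simple_mem_WP cs ht) hx),
    length_mul_of_forall_not_isRightDescent cs hw hx, Nat.add_lt_add_iff_left]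

end ProductDescents

theorem conj_mem_WP_of_subset_AdSet {K L : Set B} {x a : W} (hKL : K ⊆ AdSet cs x L)
    (ha : a ∈ WP cs K) : x⁻¹ * a * x ∈ WP cs L := by
  have hle : WP cs K ≤ (WP cs L).map (MulAut.conj x).toMonoidHom := by
    rw [WP, Subgroup.closure_le]
    rintro _ ⟨k, hk, rfl⟩
    obtain ⟨t, ht, hkt⟩ := hKL hk
    exact ⟨s t, simple_mem_WP cs ht, by simp [hkt]⟩
  obtain ⟨c, hc, rfl⟩ := hle ha
  simpa [mul_assoc] using hc

end Parabolic

theorem pr_succ (u : ℕ → W) (n : ℕ) : pr u (n + 1) = pr u n * u n := by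
  simp [pr, List.range_succ]

theorem pr_one (u : ℕ → W) : pr u 1 = u 0 := by
  simp [pr]

def prInv (w : ℕ → W) : ℕ → W
  | 0 => w 0
  | n + 1 => (w n)⁻¹ * w (n + 1)

theorem pr_succ_prInv (w : ℕ → W) (n : ℕ) : pr (prInv w) (n + 1) = w n := by
  induction n with
  | zero => simp [pr_one, prInv]
  | succ n ih => rw [pr_succ, ih, prInv, mul_inv_cancel_left]

theorem prInv_pr_succ (u : ℕ → W) : prInv (fun n ↦ pr u (n + 1)) = u := by
  funext n
  cases n with
  | zero => simp [prInv, pr_one]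
  | succ n => simp [prInv, pr_succ _ (n + 1)]

theorem image_eq_image_inter_iff {α β : Type*} (f : α ≃ β) (X Y : Set α) (Z : Set β) :
    f '' X = f '' Y ∩ Z ↔ X = Y ∩ f.symm '' Z := by
  rw [← f.image_symm_image Z, ← Set.image_inter f.injective, f.symm_image_image,
    f.injective.image_injective.eq_iff]

section Sequences

variable {cs : CoxeterSystem M W} {f : B ≃ B} {J : Set B}

theorem SSeq.isMinDC (sq : SSeq cs f J) (n : ℕ) :
    IsMinDC cs (f '' sq.Jn n) (sq.Jn n) (pr sq.u (n + 1)) := by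
  rw [isMinDC_iff]
  induction n with
  | zero =>
    have h0 := sq.he 0
    rw [sq.hJ'0, sq.hJ0, isMinL_iff, isMinR_iff] at h0
    rwa [sq.hJ0, pr_one]
  | succ n ih =>
    obtain ⟨-, hR⟩ := ih
    rw [pr_succ]
    refine ⟨fun k hk ↦ ?_, fun j hj ↦ ?_⟩
    · rw [sq.hb n] at hk
      obtain ⟨hk, t, ht, hkt⟩ := hk
      have ht' : t ∈ sq.J'n (n + 1) := by
        rw [sq.hc n]
        exact ⟨ht, k, hk, by rw [hkt]; group⟩
      rw [isLeftDescent_mul_iff cs hR (sq.hd n) ht hkt]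
      exact (isMinL_iff cs).mp (sq.he (n + 1)).1 t ht'
    · rw [isRightDescent_mul_iff cs hR (sq.hd n) (sq.hmono n hj)]
      exact (isMinR_iff cs).mp (sq.he (n + 1)).2 j hj

def SSeq.toTSeq (sq : SSeq cs f J) : TSeq cs f J where
  Jn := sq.Jn
  w n := pr sq.u (n + 1)
  hJ0 := sq.hJ0
  hmono := sq.hmono
  hb n := (image_eq_image_inter_iff f _ _ _).mp (sq.hb n)
  hc := sq.isMinDC
  hd n := ⟨1, one_mem _, sq.u (n + 1), sq.hd n, by rw [one_mul, pr_succ]⟩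

theorem TSeq.image_Jn_succ (tq : TSeq cs f J) (n : ℕ) :
    f '' tq.Jn (n + 1) = f '' tq.Jn n ∩ AdSet cs (tq.w n) (tq.Jn n) :=
  (image_eq_image_inter_iff f _ _ _).mpr (tq.hb n)

theorem TSeq.prInv_succ_mem (tq : TSeq cs f J) (n : ℕ) :
    prInv tq.w (n + 1) ∈ WP cs (tq.Jn n) := by
  obtain ⟨a, ha, b, hb, hw⟩ := tq.hd n
  have hsub : f '' tq.Jn (n + 1) ⊆ AdSet cs (tq.w n) (tq.Jn n) := by
    rw [tq.image_Jn_succ n]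
    exact Set.inter_subset_right
  rw [prInv, hw, show (tq.w n)⁻¹ * (a * tq.w n * b) = (tq.w n)⁻¹ * a * tq.w n * b by group]
  exact mul_mem (conj_mem_WP_of_subset_AdSet cs hsub ha) hb

def TSeq.J'n (tq : TSeq cs f J) : ℕ → Set B
  | 0 => f '' J
  | n + 1 => tq.Jn n ∩ AdSet cs (tq.w n)⁻¹ (f '' tq.Jn n)

theorem TSeq.isMinL_isMinR_prInv (tq : TSeq cs f J) (n : ℕ) :
    IsMinL cs (tq.J'n n) (prInv tq.w n) ∧ IsMinR cs (tq.Jn n) (prInv tq.w n) := by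
  rw [isMinL_iff, isMinR_iff]
  cases n with
  | zero =>
    have h0 := (isMinDC_iff cs).mp (tq.hc 0)
    rw [tq.hJ0] at h0 ⊢
    exact h0
  | succ n =>
    have hR := ((isMinDC_iff cs).mp (tq.hc n)).2
    have hx := tq.prInv_succ_mem n
    have hsplit : tq.w (n + 1) = tq.w n * prInv tq.w (n + 1) := (mul_inv_cancel_left _ _).symm
    obtain ⟨hL', hR'⟩ := (isMinDC_iff cs).mp (tq.hc (n + 1))
    rw [hsplit] at hL' hR'
    refine ⟨?_, fun j hj ↦ ?_⟩
    · rintro t ⟨ht, k, hk, hkt⟩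
      have hkt' : cs.simple k = tq.w n * cs.simple t * (tq.w n)⁻¹ := by rw [hkt]; group
      rw [← isLeftDescent_mul_iff cs hR hx ht hkt']
      exact hL' k (by rw [tq.image_Jn_succ n]; exact ⟨hk, t, ht, hkt'⟩)
    · rw [← isRightDescent_mul_iff cs hR hx (tq.hmono n hj)]
      exact hR' j hj

def TSeq.toSSeq (tq : TSeq cs f J) : SSeq cs f J where
  Jn := tq.Jn
  J'n := tq.J'n
  u := prInv tq.w
  hJ0 := tq.hJ0
  hJ'0 := rfl
  hmono := tq.hmono
  hb n := by rw [pr_succ_prInv]; exact tq.image_Jn_succ n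
  hc n := by rw [pr_succ_prInv]; rfl
  hd := tq.prInv_succ_mem
  he := tq.isMinL_isMinR_prInv

attribute [ext] SSeq TSeq

theorem SSeq.toTSeq_toSSeq (sq : SSeq cs f J) : sq.toTSeq.toSSeq = sq := by
  ext1
  · rfl
  · funext n
    cases n with
    | zero => exact sq.hJ'0.symm
    | succ n => exact (sq.hc n).symm
  · exact prInv_pr_succ sq.u

theorem TSeq.toSSeq_toTSeq (tq : TSeq cs f J) : tq.toSSeq.toTSeq = tq := by
  ext1
  · rfl
  · funext n
    exact pr_succ_prInv tq.w n

end Sequences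

theorem statement8_general (cs : CoxeterSystem M W) (f : B ≃ B) (J : Set B) :
    ∃ Φ : SSeq cs f J → TSeq cs f J,
      (∀ s : SSeq cs f J,
        (Φ s).Jn = s.Jn ∧ ∀ n, (Φ s).w n = pr s.u (n + 1)) ∧
      Function.Bijective Φ :=
  ⟨SSeq.toTSeq, fun _ ↦ ⟨rfl, fun _ ↦ rfl⟩,
    Function.bijective_iff_has_inverse.mpr
      ⟨TSeq.toSSeq, SSeq.toTSeq_toSSeq, TSeq.toSSeq_toTSeq⟩⟩

/-- Proposition 2.4: there is a bijection `S(J, ε) → T(J, ε)` given by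
`(J_n, J'_n, u_n)_{n≥0} ↦ (J_n, u_0 u_1 ⋯ u_n)_{n≥0}`. -/
theorem statement8 [Finite B] (cs : CoxeterSystem M W) (f : B ≃ B) (e : W ≃* W)
    (hef : ∀ b, e (cs.simple b) = cs.simple (f b)) (J J' : Set B)
    (hJ' : f '' J = J') :
    ∃ Φ : SSeq cs f J → TSeq cs f J,
      (∀ s : SSeq cs f J,
        (Φ s).Jn = s.Jn ∧ ∀ n, (Φ s).w n = pr s.u (n + 1)) ∧
      Function.Bijective Φ :=
  statement8_general cs f J

end Lusztig
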